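/- arXiv:2207.07698 — 4 statements merged into one kernel-verified Lean document; each statement's English description precedes it below -/
import Mathlib

section
/- Let (b_j)_{j≥1} be a sequence of nonnegative real numbers, let K ≥ 0, and let A be a function assigning to every multi-index ν a nonnegative real number A(ν). Assume A(0) ≤ K and that for every multi-index ν ≠ 0 we have A(ν) ≤ ∑_{j ∈ supp(ν)} ν_j · b_j · A(ν − e_j). Then for every multi-index ν it holds that A(ν) ≤ |ν|! · b^ν · K, where b^ν = ∏_j b_j^{ν_j}. -/
/-- The order `|ν|` of a multi-index `ν : ℕ →₀ ℕ`. -/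
def multiOrder (ν : ℕ →₀ ℕ) : ℕ := ν.sum fun _ n => n

/-!
Each application of the recursion lowers the order by one and contributes a factor `ν_j b_j`.
Once `A (ν - e_j) ≤ (|ν| - 1)! b^(ν - e_j) K` is known, the `j`-th term is at most
`ν_j (|ν| - 1)! b^ν K`, and summing over `j` turns `∑ ν_j` into `|ν|`, i.e. `(|ν| - 1)!` into `|ν|!`.
The induction runs along the well-founded order on multi-indices.
-/

open Finsupp Nat

namespace Finsupp

variable {ι : Type*} {ν : ι →₀ ℕ} {j : ι}

lemma sub_single_one_add_single_one (hj : j ∈ ν.support) : ν - single j 1 + single j 1 = ν :=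
  tsub_add_cancel_of_le <| single_le_iff.mpr <| Nat.one_le_iff_ne_zero.mpr <| mem_support_iff.mp hj

lemma sub_single_one_lt (hj : j ∈ ν.support) : ν - single j 1 < ν := by
  conv_rhs => rw [← sub_single_one_add_single_one hj]
  exact lt_add_of_pos_right _ (pos_iff_ne_zero.mpr (single_ne_zero.mpr one_ne_zero))

lemma degree_sub_single_one (hj : j ∈ ν.support) : degree (ν - single j 1) = degree ν - 1 := by
  conv_rhs => rw [← sub_single_one_add_single_one hj]
  rw [map_add, degree_single, Nat.add_sub_cancel]

lemma prod_pow_sub_single_one_mul {M : Type*} [CommMonoid M] (b : ι → M) (hj : j ∈ ν.support) :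
    (ν - single j 1).prod (fun i n => b i ^ n) * b j = ν.prod (fun i n => b i ^ n) := by
  conv_rhs => rw [← sub_single_one_add_single_one hj]
  rw [prod_add_index' (fun _ => pow_zero _) (fun _ _ _ => pow_add _ _ _),
    prod_single_index (h := fun i n => b i ^ n) (pow_zero _), pow_one]

variable {R : Type*} [CommSemiring R] [PartialOrder R] [IsOrderedRing R]

theorem le_factorial_degree_mul_prod_pow_mul {b : ι → R} (hb : ∀ j, 0 ≤ b j) {K : R}
    {A : (ι →₀ ℕ) → R} (hA0 : A 0 ≤ K)
    (hrec : ∀ ν : ι →₀ ℕ, ν ≠ 0 →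
      A ν ≤ ∑ j ∈ ν.support, (ν j : R) * b j * A (ν - single j 1))
    (ν : ι →₀ ℕ) : A ν ≤ (degree ν)! * ν.prod (fun j n => b j ^ n) * K := by
  induction ν using WellFoundedLT.induction with
  | _ ν ih =>
  rcases eq_or_ne ν 0 with rfl | hν
  · simpa using hA0
  set C := ((degree ν - 1)! : R) * ν.prod (fun j n => b j ^ n) * K with hC
  have hterm : ∀ j ∈ ν.support, (ν j : R) * b j * A (ν - single j 1) ≤ ν j * C := by
    intro j hj
    calc (ν j : R) * b j * A (ν - single j 1)
        ≤ ν j * b j * ((degree ν - 1)! * (ν - single j 1).prod (fun i n => b i ^ n) * K) := by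
          rw [← degree_sub_single_one hj]
          exact mul_le_mul_of_nonneg_left (ih _ (sub_single_one_lt hj)) (mul_nonneg (Nat.cast_nonneg _) (hb j))
      _ = ν j * C := by
          rw [hC, ← prod_pow_sub_single_one_mul b hj]
          ring
  calc A ν ≤ ∑ j ∈ ν.support, (ν j : R) * b j * A (ν - single j 1) := hrec ν hν
    _ ≤ ∑ j ∈ ν.support, (ν j : R) * C := Finset.sum_le_sum hterm
    _ = (degree ν)! * ν.prod (fun j n => b j ^ n) * K := by
      rw [← Finset.sum_mul, ← Nat.cast_sum, ← degree_apply,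
        ← Nat.mul_factorial_pred ((degree_eq_zero_iff ν).not.mpr hν)]
      push_cast
      ring

end Finsupp

theorem stmt0_general (b : ℕ → ℝ) (hb : ∀ j, 0 ≤ b j) (K : ℝ)
    (A : (ℕ →₀ ℕ) → ℝ)
    (hA0 : A 0 ≤ K)
    (hrec : ∀ ν : ℕ →₀ ℕ, ν ≠ 0 →
      A ν ≤ ∑ j ∈ ν.support, (ν j : ℝ) * b j * A (ν - Finsupp.single j 1)) :
    ∀ ν : ℕ →₀ ℕ,
      A ν ≤ (Nat.factorial (multiOrder ν) : ℝ) * (∏ j ∈ ν.support, b j ^ ν j) * K :=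
  -- `multiOrder` and the product over the support unfold to `Finsupp.degree` and `Finsupp.prod`.
  le_factorial_degree_mul_prod_pow_mul hb hA0 hrec

/-- inductive regularity bound (affine/uniform setting). -/
theorem stmt0 (b : ℕ → ℝ) (hb : ∀ j, 0 ≤ b j) (K : ℝ) (hK : 0 ≤ K)
    (A : (ℕ →₀ ℕ) → ℝ) (hA : ∀ ν, 0 ≤ A ν)
    (hA0 : A 0 ≤ K)
    (hrec : ∀ ν : ℕ →₀ ℕ, ν ≠ 0 →
      A ν ≤ ∑ j ∈ ν.support, (ν j : ℝ) * b j * A (ν - Finsupp.single j 1)) :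
    ∀ ν : ℕ →₀ ℕ,
      A ν ≤ (Nat.factorial (multiOrder ν) : ℝ) * (∏ j ∈ ν.support, b j ^ ν j) * K :=
  stmt0_general b hb K A hA0 hrec
end

section
/- Let C ≥ 1, let (β_j)_{j≥1} be a sequence of nonnegative real numbers, and let A be a function assigning to every multi-index ν with ν_j ≤ 1 for all j a nonnegative real number A(ν). Assume that for every such multi-index ν ≠ 0 we have A(ν) ≤ C · ∑_{0 ≠ m ≤ ν} binom(ν, m) · (1 + 3^{|m|}) · β^m · A(ν − m). Then for every multi-index ν with ν_j ≤ 1 for all j it holds that A(ν) ≤ C^{|ν|} · 4^{|ν|} · Λ_{|ν|} · β^ν · A(0), where (Λ_k) are the ordered Bell numbers. -/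
/-- The ordered Bell numbers: `Λ₀ = 1` and `Λ_k = ∑_{ℓ=1}^k C(k,ℓ) Λ_{k-ℓ}` for `k ≥ 1`. -/
def orderedBell : ℕ → ℕ
  | 0 => 1
  | (k + 1) => ∑ i ∈ Finset.range (k + 1), Nat.choose (k + 1) (i + 1) * orderedBell (k - i)
  decreasing_by exact Nat.lt_succ_of_le (Nat.sub_le k i)

/-!
Strong induction on `ν`. For a multi-index with entries in `{0, 1}` every binomial
`binom(ν, m)` equals `1`; for `m ≠ 0` we have `1 + 3^|m| ≤ 4^|m|` and `C^(1 + |ν - m|) ≤ C^|ν|`,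
and `β^m β^(ν - m) = β^ν`. Plugging the induction hypothesis for `A (ν - m)` into the recursion
therefore leaves `∑_{0 ≠ m ≤ ν} Λ_{|ν| - |m|}`, and since the `m ≤ ν` are the subsets of
`supp ν`, grouping them by cardinality turns this sum into the defining recursion of `Λ_{|ν|}`.
-/

open Finset

lemma one_add_three_pow_le_four_pow {ℓ : ℕ} (hℓ : ℓ ≠ 0) : (1 : ℝ) + 3 ^ ℓ ≤ 4 ^ ℓ := by
  simpa [one_pow, show (1 : ℝ) + 3 = 4 by norm_num] using
    pow_add_pow_le (zero_le_one' ℝ) (by norm_num : (0 : ℝ) ≤ 3) hℓ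

lemma sum_range_choose_mul_orderedBell {n : ℕ} (hn : n ≠ 0) :
    ∑ ℓ ∈ range (n + 1), n.choose ℓ * orderedBell (n - ℓ) = 2 * orderedBell n := by
  obtain ⟨k, rfl⟩ := Nat.exists_eq_succ_of_ne_zero hn
  rw [sum_range_succ', Nat.choose_zero_right, one_mul, Nat.sub_zero, two_mul]
  congr 1
  rw [orderedBell]
  simp only [Nat.succ_sub_succ]

namespace MultiIndex

lemma multiOrder_eq_degree (ν : ℕ →₀ ℕ) : multiOrder ν = ν.degree := rfl

@[simp]
lemma multiOrder_zero : multiOrder 0 = 0 := map_zero (Finsupp.degree (σ := ℕ))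

lemma multiOrder_eq_zero_iff {ν : ℕ →₀ ℕ} : multiOrder ν = 0 ↔ ν = 0 :=
  Finsupp.degree_eq_zero_iff ν

lemma multiOrder_tsub_add {ν m : ℕ →₀ ℕ} (hm : m ≤ ν) :
    multiOrder (ν - m) + multiOrder m = multiOrder ν := by
  simp only [multiOrder_eq_degree, ← map_add, tsub_add_cancel_of_le hm]

lemma multiOrder_eq_card_support {ν : ℕ →₀ ℕ} (hν : ∀ j, ν j ≤ 1) :
    multiOrder ν = #ν.support := by
  rw [multiOrder_eq_degree, Finsupp.degree_apply, card_eq_sum_ones]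
  refine sum_congr rfl fun j hj => ?_
  have := Finsupp.mem_support_iff.1 hj
  have := hν j
  omega

lemma tsub_lt_self_of_ne_zero {ι : Type*} {ν m : ι →₀ ℕ} (hm : m ≤ ν) (hm0 : m ≠ 0) :
    ν - m < ν := by
  refine tsub_le_self.lt_of_ne fun h => hm0 ?_
  have := tsub_add_cancel_of_le hm
  rwa [h, add_eq_left] at this

lemma prod_pow_mul_prod_pow_tsub {R ι : Type*} [CommMonoid R] (β : ι → R) {ν m : ι →₀ ℕ}
    (hm : m ≤ ν) :
    (∏ j ∈ m.support, β j ^ m j) * (∏ j ∈ (ν - m).support, β j ^ (ν - m) j) =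
      ∏ j ∈ ν.support, β j ^ ν j := by
  have := Finsupp.prod_add_index' (f := m) (g := ν - m) (h := fun j k => β j ^ k)
    (fun _ => pow_zero _) (fun _ => pow_add _)
  rwa [add_tsub_cancel_of_le hm, eq_comm] at this

lemma prod_choose_eq_one {ι : Type*} {ν m : ι →₀ ℕ} (hν : ∀ j, ν j ≤ 1) (hm : m ≤ ν) :
    ∏ j ∈ ν.support, (ν j).choose (m j) = 1 := by
  refine prod_eq_one fun j _ => ?_
  obtain h | h : m j = 0 ∨ m j = ν j := by have := hm j; have := hν j; omega
  · rw [h, Nat.choose_zero_right]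
  · rw [h, Nat.choose_self]

lemma sum_Iic_eq_sum_powerset {M : Type*} [AddCommMonoid M] {ν : ℕ →₀ ℕ} (hν : ∀ j, ν j ≤ 1)
    (g : ℕ → M) :
    ∑ m ∈ Iic ν, g (multiOrder m) = ∑ s ∈ ν.support.powerset, g #s := by
  classical
  refine sum_nbij' (fun m => m.support) (fun s => ν.filter (· ∈ s)) ?_ ?_ ?_ ?_ ?_
  · intro m hm
    exact mem_powerset.2 (Finsupp.support_mono (mem_Iic.1 hm))
  · intro s _
    exact mem_Iic.2 fun j => by rw [Finsupp.filter_apply]; split_ifs <;> simp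
  · intro m hm
    ext j
    have := mem_Iic.1 hm j
    have := hν j
    simp only [Finsupp.filter_apply, Finsupp.mem_support_iff]
    split_ifs <;> omega
  · intro s hs
    ext j
    have := @mem_powerset.1 hs j
    simp only [Finsupp.mem_support_iff, Finsupp.filter_apply] at this ⊢
    split_ifs <;> tauto
  · intro m hm
    rw [multiOrder_eq_card_support fun j => (mem_Iic.1 hm j).trans (hν j)]

lemma sum_Iic_erase_zero_orderedBell {ν : ℕ →₀ ℕ} (hν : ∀ j, ν j ≤ 1) (hν0 : ν ≠ 0) :
    ∑ m ∈ (Iic ν).erase 0, orderedBell (multiOrder ν - multiOrder m) =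
      orderedBell (multiOrder ν) := by
  have htotal := add_sum_erase (Iic ν) (fun m => orderedBell (multiOrder ν - multiOrder m))
    (mem_Iic.2 zero_le)
  rw [sum_Iic_eq_sum_powerset hν (fun ℓ => orderedBell (multiOrder ν - ℓ)),
    sum_powerset_apply_card (fun ℓ => orderedBell (multiOrder ν - ℓ)),
    ← multiOrder_eq_card_support hν] at htotal
  simp only [smul_eq_mul] at htotal
  rw [sum_range_choose_mul_orderedBell (multiOrder_eq_zero_iff.not.2 hν0),
    multiOrder_zero, Nat.sub_zero] at htotal
  omega

lemma mul_summand_le {C : ℝ} (hC : 1 ≤ C) {β : ℕ → ℝ} (hβ : ∀ j, 0 ≤ β j) {a a₀ : ℝ}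
    (ha₀ : 0 ≤ a₀) {ν m : ℕ →₀ ℕ} (hν : ∀ j, ν j ≤ 1) (hm : m ≤ ν) (hm0 : m ≠ 0)
    (ha : a ≤ C ^ multiOrder (ν - m) * 4 ^ multiOrder (ν - m) *
      (orderedBell (multiOrder (ν - m)) : ℝ) * (∏ j ∈ (ν - m).support, β j ^ (ν - m) j) * a₀) :
    C * ((∏ j ∈ ν.support, ((ν j).choose (m j) : ℝ)) * (1 + 3 ^ multiOrder m) *
        (∏ j ∈ m.support, β j ^ m j) * a) ≤
      C ^ multiOrder ν * 4 ^ multiOrder ν * (∏ j ∈ ν.support, β j ^ ν j) * a₀ *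
        (orderedBell (multiOrder ν - multiOrder m) : ℝ) := by
  set ℓ := multiOrder m
  set k := multiOrder (ν - m)
  have hℓ : ℓ ≠ 0 := multiOrder_eq_zero_iff.not.2 hm0
  have hν_order : multiOrder ν = k + ℓ := (multiOrder_tsub_add hm).symm
  have hβm : 0 ≤ ∏ j ∈ m.support, β j ^ m j := prod_nonneg fun j _ => pow_nonneg (hβ j) _
  have hβr : 0 ≤ ∏ j ∈ (ν - m).support, β j ^ (ν - m) j :=
    prod_nonneg fun j _ => pow_nonneg (hβ j) _
  rw [← Nat.cast_prod, prod_choose_eq_one hν hm, Nat.cast_one, one_mul, hν_order,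
    Nat.add_sub_cancel, ← prod_pow_mul_prod_pow_tsub β hm]
  set X := C ^ k * 4 ^ k * (orderedBell k : ℝ) * (∏ j ∈ (ν - m).support, β j ^ (ν - m) j) * a₀
  have hX : 0 ≤ X := by positivity
  calc C * ((1 + 3 ^ ℓ) * (∏ j ∈ m.support, β j ^ m j) * a)
      ≤ C * ((1 + 3 ^ ℓ) * (∏ j ∈ m.support, β j ^ m j) * X) := by gcongr
    _ ≤ C * (4 ^ ℓ * (∏ j ∈ m.support, β j ^ m j) * X) := by
        gcongr
        exact one_add_three_pow_le_four_pow hℓ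
    _ = C ^ (k + 1) * 4 ^ (k + ℓ) * ((∏ j ∈ m.support, β j ^ m j) *
          ∏ j ∈ (ν - m).support, β j ^ (ν - m) j) * a₀ * (orderedBell k : ℝ) := by ring
    _ ≤ C ^ (k + ℓ) * 4 ^ (k + ℓ) * ((∏ j ∈ m.support, β j ^ m j) *
          ∏ j ∈ (ν - m).support, β j ^ (ν - m) j) * a₀ * (orderedBell k : ℝ) := by
        gcongr
        omega

end MultiIndex

open MultiIndex

/-- inductive regularity bound in the lognormal setting, via ordered Bell numbers. -/
theorem stmt1 (C : ℝ) (hC : 1 ≤ C) (β : ℕ → ℝ) (hβ : ∀ j, 0 ≤ β j)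
    (A : (ℕ →₀ ℕ) → ℝ) (hA : ∀ ν, 0 ≤ A ν)
    (hrec : ∀ ν : ℕ →₀ ℕ, (∀ j, ν j ≤ 1) → ν ≠ 0 →
      A ν ≤ C * ∑ m ∈ (Finset.Iic ν).erase 0,
        (∏ j ∈ ν.support, (Nat.choose (ν j) (m j) : ℝ)) *
          (1 + 3 ^ (multiOrder m)) * (∏ j ∈ m.support, β j ^ m j) * A (ν - m)) :
    ∀ ν : ℕ →₀ ℕ, (∀ j, ν j ≤ 1) →
      A ν ≤ C ^ (multiOrder ν) * 4 ^ (multiOrder ν) * (orderedBell (multiOrder ν) : ℝ) *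
        (∏ j ∈ ν.support, β j ^ ν j) * A 0 := by
  intro ν
  induction ν using WellFoundedLT.induction with
  | _ ν ih =>
  intro hν
  rcases eq_or_ne ν 0 with rfl | hν0
  · simp [orderedBell]
  calc A ν ≤ C * ∑ m ∈ (Iic ν).erase 0, (∏ j ∈ ν.support, ((ν j).choose (m j) : ℝ)) *
        (1 + 3 ^ multiOrder m) * (∏ j ∈ m.support, β j ^ m j) * A (ν - m) := hrec ν hν hν0
    _ ≤ ∑ m ∈ (Iic ν).erase 0, C ^ multiOrder ν * 4 ^ multiOrder ν *
        (∏ j ∈ ν.support, β j ^ ν j) * A 0 *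
          (orderedBell (multiOrder ν - multiOrder m) : ℝ) := by
      rw [mul_sum]
      refine sum_le_sum fun m hm => ?_
      obtain ⟨hm0, hmν⟩ := mem_erase.1 hm
      rw [mem_Iic] at hmν
      have hνm : ∀ j, (ν - m) j ≤ 1 := fun j => tsub_le_self.trans (hν j)
      exact mul_summand_le hC hβ (hA 0) hν hmν hm0
        (ih (ν - m) (tsub_lt_self_of_ne_zero hmν hm0) hνm)
    _ = _ := by
      rw [← mul_sum, ← Nat.cast_sum, sum_Iic_erase_zero_orderedBell hν hν0]
      ring
end

section
/- Let C ≥ 1, let (β_j)_{j≥1} be a sequence of nonnegative real numbers, and let A be a function assigning to every multi-index ν with ν_j ≤ 1 for all j a nonnegative real number A(ν). Assume that for every such multi-index ν ≠ 0 we have A(ν) ≤ C · ∑_{0 ≠ m ≤ ν} binom(ν, m) · (1 + 3^{|m|}) · β^m · A(ν − m). Then for every multi-index ν with ν_j ≤ 1 for all j it holds that A(ν) ≤ C^{|ν|} · 4^{|ν|} · (|ν|! / (log 2)^{|ν|}) · β^ν · A(0). -/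
open Finset Real

section MultiIndex

variable {ν m : ℕ →₀ ℕ}

lemma multiOrder_eq_degree (ν : ℕ →₀ ℕ) : multiOrder ν = ν.degree := rfl

lemma multiOrder_tsub (hm : m ≤ ν) : multiOrder (ν - m) = multiOrder ν - multiOrder m := by
  simp only [multiOrder_eq_degree]
  conv_rhs => rw [← add_tsub_cancel_of_le hm, map_add]
  simp

lemma prod_pow_mul_prod_pow_tsub (β : ℕ → ℝ) (hm : m ≤ ν) :
    (∏ j ∈ m.support, β j ^ m j) * ∏ j ∈ (ν - m).support, β j ^ (ν - m) j
      = ∏ j ∈ ν.support, β j ^ ν j := by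
  have := Finsupp.prod_add_index' (f := m) (g := ν - m) (h := fun j n => β j ^ n)
    (fun _ => pow_zero _) (fun _ _ _ => pow_add _ _ _)
  rwa [add_tsub_cancel_of_le hm, eq_comm] at this

lemma prod_choose_eq_one (hν : ∀ j, ν j ≤ 1) (hm : m ≤ ν) :
    ∏ j ∈ ν.support, ((ν j).choose (m j) : ℝ) = 1 := by
  refine prod_eq_one fun j _ => ?_
  rcases Nat.le_one_iff_eq_zero_or_eq_one.mp ((hm j).trans (hν j)) with h | h
  · simp [h]
  · simp [h, le_antisymm (hν j) (h ▸ hm j)]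

lemma multiOrder_eq_card_support (hν : ∀ j, ν j ≤ 1) : multiOrder ν = #ν.support := by
  rw [multiOrder_eq_degree, Finsupp.degree_apply, card_eq_sum_ones]
  refine sum_congr rfl fun j hj => ?_
  have := Finsupp.mem_support_iff.mp hj
  have := hν j
  omega

lemma sum_Iic_eq_sum_powerset {M : Type*} [AddCommMonoid M] (hν : ∀ j, ν j ≤ 1)
    (f : ℕ → M) : ∑ m ∈ Iic ν, f (multiOrder m) = ∑ s ∈ ν.support.powerset, f #s := by
  refine sum_nbij' (fun m => m.support) (fun s => ν.filter (· ∈ s)) ?_ ?_ ?_ ?_ ?_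
  · intro m hm
    exact mem_powerset.mpr (Finsupp.support_mono (mem_Iic.mp hm))
  · intro s _
    exact mem_Iic.mpr fun j => by simp only [Finsupp.filter_apply]; split_ifs <;> simp
  · intro m hm
    ext j
    have := mem_Iic.mp hm j
    have := hν j
    simp only [Finsupp.filter_apply, Finsupp.mem_support_iff]
    split_ifs <;> omega
  · intro s hs
    ext j
    simp only [Finsupp.support_filter, mem_filter, and_iff_right_iff_imp]
    exact @mem_powerset.mp hs j
  · intro m hm
    rw [multiOrder_eq_card_support fun j => (mem_Iic.mp hm j).trans (hν j)]

lemma sum_Iic_erase_zero (hν : ∀ j, ν j ≤ 1) (f : ℕ → ℝ) :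
    ∑ m ∈ (Iic ν).erase 0, f (multiOrder m)
      = ∑ l ∈ Icc 1 (multiOrder ν), ((multiOrder ν).choose l : ℝ) * f l := by
  have h0 : (0 : ℕ →₀ ℕ) ∈ Iic ν := mem_Iic.mpr bot_le
  rw [sum_erase_eq_sub h0, sum_Iic_eq_sum_powerset hν, sum_powerset_apply_card,
    ← multiOrder_eq_card_support hν, sum_range_eq_add_Ico _ (Nat.succ_pos _)]
  simp [multiOrder_eq_degree, nsmul_eq_mul, Ico_add_one_right_eq_Icc]

end MultiIndex

section Bound

noncomputable def lognormalBound (C : ℝ) (k : ℕ) : ℝ :=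
  C ^ k * 4 ^ k * ((k.factorial : ℝ) / log 2 ^ k)

lemma exp_log_two_div_four_le : exp (log 2 / 4) ≤ 6 / 5 := by
  rw [← le_log_iff_exp_le (by norm_num), div_le_iff₀' (by norm_num)]
  calc log 2 ≤ log ((6 / 5) ^ 4) := log_le_log (by norm_num) (by norm_num)
    _ = 4 * log (6 / 5) := by rw [log_pow]; norm_num

lemma sum_Icc_one_pow_div_factorial_le {y : ℝ} (hy : 0 ≤ y) (n : ℕ) :
    ∑ l ∈ Icc 1 n, y ^ l / l.factorial ≤ exp y - 1 := by
  have := sum_le_exp_of_nonneg hy (n + 1)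
  rw [sum_range_eq_add_Ico _ n.succ_pos, Nat.succ_eq_add_one, Ico_add_one_right_eq_Icc] at this
  simp only [pow_zero, Nat.factorial_zero, Nat.cast_one, div_one] at this
  linarith

lemma sum_Icc_one_add_three_pow_mul_le_one (n : ℕ) :
    ∑ l ∈ Icc 1 n, (1 + 3 ^ l : ℝ) * (log 2 / 4) ^ l / l.factorial ≤ 1 := by
  set x := log 2 / 4
  have hx : 0 ≤ x := by positivity
  have hsplit : ∑ l ∈ Icc 1 n, (1 + 3 ^ l : ℝ) * x ^ l / l.factorial
      = ∑ l ∈ Icc 1 n, x ^ l / l.factorial + ∑ l ∈ Icc 1 n, (3 * x) ^ l / l.factorial := by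
    rw [← sum_add_distrib]
    exact sum_congr rfl fun l _ => by rw [mul_pow]; ring
  have hexp3 : exp (3 * x) = exp x ^ 3 := by rw [← exp_nat_mul]; norm_num
  have hexp := exp_log_two_div_four_le
  have hexp_pos := (exp_pos x).le
  rw [hsplit]
  linarith [sum_Icc_one_pow_div_factorial_le hx n,
    sum_Icc_one_pow_div_factorial_le (by positivity : 0 ≤ 3 * x) n,
    pow_le_pow_left₀ hexp_pos hexp 3]

lemma choose_mul_four_pow_mul_factorial_div {l n : ℕ} (hln : l ≤ n) :
    (n.choose l : ℝ) * (4 ^ (n - l) * ((n - l).factorial / log 2 ^ (n - l)))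
      = 4 ^ n * (n.factorial / log 2 ^ n) * ((log 2 / 4) ^ l / l.factorial) := by
  obtain ⟨k, rfl⟩ := Nat.exists_eq_add_of_le hln
  have hchoose : ((l + k).choose l * l.factorial * k.factorial : ℝ) = (l + k).factorial := by
    rw [Nat.choose_symm_add]; exact_mod_cast Nat.add_choose_mul_factorial_mul_factorial l k
  have hL : log 2 ≠ 0 := (log_pos one_lt_two).ne'
  rw [Nat.add_sub_cancel_left, ← hchoose, div_pow]
  field_simp
  ring

lemma mul_sum_choose_mul_lognormalBound_le {C : ℝ} (hC : 1 ≤ C) (n : ℕ) :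
    C * ∑ l ∈ Icc 1 n, (n.choose l : ℝ) * ((1 + 3 ^ l) * lognormalBound C (n - l))
      ≤ lognormalBound C n := by
  have hC0 : 0 ≤ C := zero_le_one.trans hC
  have hb : 0 ≤ lognormalBound C n := by unfold lognormalBound; positivity
  calc C * ∑ l ∈ Icc 1 n, (n.choose l : ℝ) * ((1 + 3 ^ l) * lognormalBound C (n - l))
      = ∑ l ∈ Icc 1 n, C * C ^ (n - l) * (1 + 3 ^ l) *
          ((n.choose l : ℝ) * (4 ^ (n - l) * ((n - l).factorial / log 2 ^ (n - l)))) := by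
        rw [mul_sum]
        exact sum_congr rfl fun l _ => by unfold lognormalBound; ring
    _ ≤ ∑ l ∈ Icc 1 n, C ^ n * (1 + 3 ^ l) *
          ((n.choose l : ℝ) * (4 ^ (n - l) * ((n - l).factorial / log 2 ^ (n - l)))) := by
        refine sum_le_sum fun l hl => ?_
        have hl := mem_Icc.mp hl
        have hCpow : C * C ^ (n - l) ≤ C ^ n := by
          rw [← pow_succ']
          exact pow_le_pow_right₀ hC (by omega)
        gcongr
    _ = lognormalBound C n * ∑ l ∈ Icc 1 n, (1 + 3 ^ l : ℝ) * (log 2 / 4) ^ l / l.factorial := by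
        rw [mul_sum]
        refine sum_congr rfl fun l hl => ?_
        rw [choose_mul_four_pow_mul_factorial_div (mem_Icc.mp hl).2, lognormalBound]
        ring
    _ ≤ lognormalBound C n :=
        mul_le_of_le_one_right hb (sum_Icc_one_add_three_pow_mul_le_one n)

end Bound

lemma le_bound_mul_prod_pow_of_recursion {C : ℝ} (hC : 0 ≤ C) {β : ℕ → ℝ} (hβ : ∀ j, 0 ≤ β j)
    {A : (ℕ →₀ ℕ) → ℝ} (hA : 0 ≤ A 0) {w b : ℕ → ℝ} (hw : ∀ l, 0 ≤ w l) (hb0 : 1 ≤ b 0)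
    (hb : ∀ n, C * ∑ l ∈ Icc 1 n, (n.choose l : ℝ) * (w l * b (n - l)) ≤ b n)
    (hrec : ∀ ν : ℕ →₀ ℕ, (∀ j, ν j ≤ 1) → ν ≠ 0 →
      A ν ≤ C * ∑ m ∈ (Iic ν).erase 0,
        (∏ j ∈ ν.support, ((ν j).choose (m j) : ℝ)) * w (multiOrder m) *
          (∏ j ∈ m.support, β j ^ m j) * A (ν - m))
    (ν : ℕ →₀ ℕ) (hν : ∀ j, ν j ≤ 1) :
    A ν ≤ b (multiOrder ν) * (∏ j ∈ ν.support, β j ^ ν j) * A 0 := by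
  have hβν : ∀ μ : ℕ →₀ ℕ, 0 ≤ ∏ j ∈ μ.support, β j ^ μ j :=
    fun μ => prod_nonneg fun j _ => pow_nonneg (hβ j) _
  induction hn : multiOrder ν using Nat.strong_induction_on generalizing ν with
  | _ n IH =>
  rcases eq_or_ne ν 0 with rfl | hν0
  · subst hn
    simpa [multiOrder_eq_degree] using le_mul_of_one_le_left hA hb0
  set P := ∏ j ∈ ν.support, β j ^ ν j
  have hterm : ∀ m ∈ (Iic ν).erase 0,
      (∏ j ∈ ν.support, ((ν j).choose (m j) : ℝ)) * w (multiOrder m) *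
        (∏ j ∈ m.support, β j ^ m j) * A (ν - m)
        ≤ w (multiOrder m) * b (n - multiOrder m) * (P * A 0) := by
    intro m hm
    obtain ⟨hm0, hmν⟩ : m ≠ 0 ∧ m ≤ ν := by simpa using hm
    have hm_pos : 0 < multiOrder m := by
      rwa [pos_iff_ne_zero, multiOrder_eq_degree, Ne, Finsupp.degree_eq_zero_iff]
    have hm_le : multiOrder m ≤ n := hn ▸ Finsupp.degree_mono hmν
    have hIH := IH (n - multiOrder m) (by omega) (ν - m)
      (fun j => (tsub_le_self).trans (hν j)) (by rw [multiOrder_tsub hmν, hn])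
    have hwβ := mul_nonneg (hw (multiOrder m)) (hβν m)
    have hP : P = _ := (prod_pow_mul_prod_pow_tsub β hmν).symm
    rw [prod_choose_eq_one hν hmν, one_mul, hP]
    calc w (multiOrder m) * (∏ j ∈ m.support, β j ^ m j) * A (ν - m)
        ≤ w (multiOrder m) * (∏ j ∈ m.support, β j ^ m j) *
            (b (n - multiOrder m) * (∏ j ∈ (ν - m).support, β j ^ (ν - m) j) * A 0) := by
          gcongr
      _ = _ := by ring
  calc A ν
      ≤ C * ∑ m ∈ (Iic ν).erase 0,
          (∏ j ∈ ν.support, ((ν j).choose (m j) : ℝ)) * w (multiOrder m) *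
            (∏ j ∈ m.support, β j ^ m j) * A (ν - m) := hrec ν hν hν0
    _ ≤ C * ∑ m ∈ (Iic ν).erase 0, w (multiOrder m) * b (n - multiOrder m) * (P * A 0) :=
        mul_le_mul_of_nonneg_left (sum_le_sum hterm) hC
    _ = C * (∑ l ∈ Icc 1 n, (n.choose l : ℝ) * (w l * b (n - l))) * (P * A 0) := by
        rw [← sum_mul, sum_Iic_erase_zero hν (fun k => w k * b (n - k)), hn, mul_assoc]
    _ ≤ b n * (P * A 0) := by
        have := hβν ν
        gcongr
        exact hb n
    _ = b n * P * A 0 := by ring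

/-- final parametric regularity bound in the lognormal setting
(factorial over powers of `log 2`). -/
theorem stmt2 (C : ℝ) (hC : 1 ≤ C) (β : ℕ → ℝ) (hβ : ∀ j, 0 ≤ β j)
    (A : (ℕ →₀ ℕ) → ℝ) (hA : ∀ ν, 0 ≤ A ν)
    (hrec : ∀ ν : ℕ →₀ ℕ, (∀ j, ν j ≤ 1) → ν ≠ 0 →
      A ν ≤ C * ∑ m ∈ (Finset.Iic ν).erase 0,
        (∏ j ∈ ν.support, (Nat.choose (ν j) (m j) : ℝ)) *
          (1 + 3 ^ (multiOrder m)) * (∏ j ∈ m.support, β j ^ m j) * A (ν - m)) :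
    ∀ ν : ℕ →₀ ℕ, (∀ j, ν j ≤ 1) →
      A ν ≤ C ^ (multiOrder ν) * 4 ^ (multiOrder ν) *
        ((Nat.factorial (multiOrder ν) : ℝ) / (Real.log 2) ^ (multiOrder ν)) *
        (∏ j ∈ ν.support, β j ^ ν j) * A 0 :=
  le_bound_mul_prod_pow_of_recursion (zero_le_one.trans hC) hβ (hA 0) (w := fun l => 1 + 3 ^ l)
    (fun l => by positivity) (by simp [lognormalBound])
    (mul_sum_choose_mul_lognormalBound_le hC) hrec
end

section
/- Let λ be a real number with 1/2 < λ < 1, set κ := 2λ/(1+λ) and ϱ(λ) := 2ζ(2λ)/(2π²)^λ, where ζ is the Riemann zeta function. Let (b_j)_{j≥1} be nonnegative real numbers with B := ∑_{j=1}^∞ b_j^κ < ∞. Then for every s ∈ ℕ, the quantity C(s, λ) := ∑_{𝔲 ⊆ {1,…,s}} (|𝔲|! · ∏_{j ∈ 𝔲} (b_j / √(ϱ(λ))))^κ · ϱ(λ)^{|𝔲|} satisfies C(s, λ) ≤ ∑_{ℓ=0}^∞ (ℓ!)^{κ − 1} · (ϱ(λ)^{1/(1+λ)} · B)^ℓ,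 and this upper bound is finite and independent of s. -/
/-!
Grouping the subsets `𝔲` by their size `ℓ` and using `(b / √ϱ) ^ κ * ϱ = b ^ κ * ϱ ^ (1 - κ / 2)`,
where `1 - κ / 2 = 1 / (1 + λ)`, the `ℓ`-th group is `ℓ! ^ κ * ϱ ^ (ℓ / (1 + λ)) * e_ℓ`, with `e_ℓ`
the `ℓ`-th elementary symmetric polynomial in `b_1 ^ κ, …, b_s ^ κ`. For nonnegative variables
`ℓ! * e_ℓ ≤ (∑ c) ^ ℓ`: expanding the power, every product of `ℓ` distinct variables occurs `ℓ!`
times (formally: induction on the variables, with `e_{ℓ+1}(a, c) = e_{ℓ+1}(c) + a e_ℓ(c)` and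
Bernoulli's inequality). Since `∑_{j < s} b_j ^ κ ≤ B`, the `ℓ`-th group is at most the `ℓ`-th
term of the series, which converges by the ratio test because `(ℓ + 1) ^ (κ - 1) → 0` for `κ < 1`.
-/

open Finset
open scoped Nat

namespace Multiset

theorem esymm_cons_succ {R : Type*} [CommSemiring R] (a : R) (s : Multiset R) (n : ℕ) :
    (a ::ₘ s).esymm (n + 1) = s.esymm (n + 1) + a * s.esymm n := by
  simp [esymm, powersetCard_cons, sum_map_mul_left]

theorem factorial_mul_esymm_le_sum_pow {R : Type*} [CommSemiring R] [LinearOrder R]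
    [IsOrderedRing R] [ExistsAddOfLE R] {s : Multiset R} (hs : ∀ a ∈ s, 0 ≤ a) (n : ℕ) :
    (n ! : R) * s.esymm n ≤ s.sum ^ n := by
  induction s using Multiset.induction_on generalizing n with
  | empty => cases n <;> simp [esymm, powersetCard_zero_right]
  | cons a s ih =>
    have ha : 0 ≤ a := hs a (mem_cons_self a s)
    have hs' : ∀ b ∈ s, 0 ≤ b := fun b hb => hs b (mem_cons_of_mem hb)
    have hsum : 0 ≤ s.sum := sum_nonneg hs'
    cases n with
    | zero => simp [esymm]
    | succ n =>
      have hna : 0 ≤ ((n : R) + 1) * a := mul_nonneg (add_nonneg n.cast_nonneg zero_le_one) ha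
      calc ((n + 1)! : R) * (a ::ₘ s).esymm (n + 1)
          = (n + 1)! * s.esymm (n + 1) + (n + 1) * a * (n ! * s.esymm n) := by
            rw [esymm_cons_succ, Nat.factorial_succ]; push_cast; ring
        _ ≤ s.sum ^ (n + 1) + (n + 1) * a * s.sum ^ n :=
            add_le_add (ih hs' _) (mul_le_mul_of_nonneg_left (ih hs' n) hna)
        _ ≤ (a ::ₘ s).sum ^ (n + 1) := by
            simpa [add_comm a, mul_right_comm _ a] using
              pow_add_mul_le_add_pow hsum (add_nonneg (mul_nonneg zero_le_two hsum) ha) (n + 1)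

end Multiset

theorem Real.div_sqrt_rpow_mul_self {b ϱ : ℝ} (hb : 0 ≤ b) (hϱ : 0 < ϱ) (κ : ℝ) :
    (b / √ϱ) ^ κ * ϱ = b ^ κ * ϱ ^ (1 - κ / 2) := by
  rw [Real.div_rpow hb (Real.sqrt_nonneg ϱ), Real.sqrt_eq_rpow, ← Real.rpow_mul hϱ.le,
    Real.rpow_sub hϱ, Real.rpow_one]
  field_simp

namespace Finset

variable {ι : Type*} {A : Finset ι}

theorem factorial_mul_sum_powersetCard_prod_le {c : ι → ℝ} (hc : ∀ j ∈ A, 0 ≤ c j) (n : ℕ) :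
    (n ! : ℝ) * ∑ t ∈ A.powersetCard n, ∏ j ∈ t, c j ≤ (∑ j ∈ A, c j) ^ n := by
  rw [← esymm_map_val]
  exact Multiset.factorial_mul_esymm_le_sum_pow (by simpa using hc) n

theorem sum_powerset_factorial_mul_prod_le {c : ι → ℝ} (hc : ∀ j ∈ A, 0 ≤ c j) {g : ℕ → ℝ}
    (hg : ∀ n, 0 ≤ g n) :
    ∑ u ∈ A.powerset, ((#u)! * g #u) * ∏ j ∈ u, c j
      ≤ ∑ n ∈ range (#A + 1), g n * (∑ j ∈ A, c j) ^ n := by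
  rw [sum_powerset]
  refine sum_le_sum fun n _ => ?_
  calc ∑ u ∈ A.powersetCard n, ((#u)! * g #u) * ∏ j ∈ u, c j
      = g n * ((n ! : ℝ) * ∑ u ∈ A.powersetCard n, ∏ j ∈ u, c j) := by
        rw [mul_sum, mul_sum]
        refine sum_congr rfl fun u hu => ?_
        rw [(mem_powersetCard.1 hu).2]
        ring
    _ ≤ g n * (∑ j ∈ A, c j) ^ n :=
        mul_le_mul_of_nonneg_left (factorial_mul_sum_powersetCard_prod_le hc n) (hg n)

theorem mul_prod_div_sqrt_rpow_mul_pow {b : ι → ℝ} (hb : ∀ j ∈ A, 0 ≤ b j) {m ϱ : ℝ}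
    (hm : 0 ≤ m) (hϱ : 0 < ϱ) (κ : ℝ) :
    (m * ∏ j ∈ A, b j / √ϱ) ^ κ * ϱ ^ #A
      = m ^ κ * (ϱ ^ (1 - κ / 2)) ^ #A * ∏ j ∈ A, b j ^ κ := by
  have hbϱ : ∀ j ∈ A, 0 ≤ b j / √ϱ := fun j hj => div_nonneg (hb j hj) (Real.sqrt_nonneg ϱ)
  rw [Real.mul_rpow hm (prod_nonneg hbϱ), mul_assoc, ← Real.finsetProd_rpow _ _ hbϱ,
    ← prod_const, ← prod_mul_distrib,
    prod_congr rfl fun j hj => Real.div_sqrt_rpow_mul_self (hb j hj) hϱ κ, prod_mul_distrib,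
    prod_const]
  ring

theorem sum_powerset_factorial_mul_prod_div_sqrt_rpow_le {b : ι → ℝ} (hb : ∀ j ∈ A, 0 ≤ b j)
    {ϱ : ℝ} (hϱ : 0 < ϱ) (κ : ℝ) :
    ∑ u ∈ A.powerset, (((#u)! : ℝ) * ∏ j ∈ u, b j / √ϱ) ^ κ * ϱ ^ #u
      ≤ ∑ n ∈ range (#A + 1), (n ! : ℝ) ^ (κ - 1) * (ϱ ^ (1 - κ / 2) * ∑ j ∈ A, b j ^ κ) ^ n := by
  calc _ = ∑ u ∈ A.powerset,
          ((#u)! * ((#u)! ^ (κ - 1) * (ϱ ^ (1 - κ / 2)) ^ #u)) * ∏ j ∈ u, b j ^ κ := by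
        refine sum_congr rfl fun u hu => ?_
        rw [mul_prod_div_sqrt_rpow_mul_pow (fun j hj => hb j (mem_powerset.1 hu hj))
          (by positivity) hϱ, Real.rpow_sub_one (by positivity)]
        field_simp
    _ ≤ ∑ n ∈ range (#A + 1),
          (n ! : ℝ) ^ (κ - 1) * (ϱ ^ (1 - κ / 2)) ^ n * (∑ j ∈ A, b j ^ κ) ^ n :=
        sum_powerset_factorial_mul_prod_le (fun j hj => Real.rpow_nonneg (hb j hj) κ)
          (g := fun n => (n ! : ℝ) ^ (κ - 1) * (ϱ ^ (1 - κ / 2)) ^ n) fun n => by positivity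
    _ = _ := by simp only [mul_pow, mul_assoc]

end Finset

theorem Real.summable_factorial_rpow_mul_pow {a : ℝ} (ha : a < 0) (x : ℝ) :
    Summable fun n : ℕ => (n ! : ℝ) ^ a * x ^ n := by
  have hnorm : ∀ n : ℕ, ‖(n ! : ℝ) ^ a * x ^ n‖ = (n ! : ℝ) ^ a * |x| ^ n := fun n => by
    rw [norm_mul, norm_pow, Real.norm_of_nonneg (by positivity), Real.norm_eq_abs]
  have hratio : Filter.Tendsto (fun n : ℕ => ((n : ℝ) + 1) ^ a * |x|) Filter.atTop (nhds 0) := by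
    simpa using ((tendsto_rpow_neg_atTop (neg_pos.2 ha)).comp
      (tendsto_natCast_atTop_atTop.atTop_add tendsto_const_nhds)).mul_const |x|
  refine summable_of_ratio_norm_eventually_le (r := 1 / 2) (by norm_num) ?_
  filter_upwards [hratio.eventually_le_const (by norm_num : (0 : ℝ) < 1 / 2)] with n hn
  rw [hnorm, hnorm, Nat.factorial_succ, Nat.cast_mul,
    Real.mul_rpow (by positivity) (by positivity), pow_succ]
  calc ((n + 1 : ℕ) : ℝ) ^ a * (n ! : ℝ) ^ a * (|x| ^ n * |x|)
      = (((n : ℝ) + 1) ^ a * |x|) * ((n ! : ℝ) ^ a * |x| ^ n) := by push_cast; ring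
    _ ≤ 1 / 2 * ((n ! : ℝ) ^ a * |x| ^ n) := by gcongr

theorem Real.tsum_one_div_nat_add_one_rpow_pos {p : ℝ} (hp : 1 < p) :
    0 < ∑' k : ℕ, 1 / ((k : ℝ) + 1) ^ p := by
  have hsum : Summable fun k : ℕ => 1 / ((k : ℝ) + 1) ^ p := by
    simpa using (summable_nat_add_iff 1).2 (Real.summable_one_div_nat_rpow.2 hp)
  exact hsum.tsum_pos (fun k => by positivity) 0 (by simp)

/-- the weight-dependent QMC constant `C(s, λ)` is bounded
independently of `s`. Here `ζ(x) = ∑_{k≥1} k^{-x}` and `ϱ(λ) = 2ζ(2λ)/(2π²)^λ`. -/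
theorem stmt11 (lam : ℝ) (hlam1 : 1 / 2 < lam) (hlam2 : lam < 1)
    (κ ϱ : ℝ) (hκ : κ = 2 * lam / (1 + lam))
    (hϱ : ϱ = 2 * (∑' k : ℕ, 1 / ((k : ℝ) + 1) ^ (2 * lam)) / (2 * Real.pi ^ 2) ^ lam)
    (b : ℕ → ℝ) (hb : ∀ j, 0 ≤ b j)
    (hB : Summable fun j => b j ^ κ) (B : ℝ) (hBdef : B = ∑' j, b j ^ κ) :
    ∀ s : ℕ,
      (∑ 𝔲 ∈ (Finset.univ : Finset (Fin s)).powerset,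
          ((Nat.factorial 𝔲.card : ℝ) * ∏ j ∈ 𝔲, (b j / Real.sqrt ϱ)) ^ κ * ϱ ^ 𝔲.card)
        ≤ ∑' ℓ : ℕ, (Nat.factorial ℓ : ℝ) ^ (κ - 1) * (ϱ ^ (1 / (1 + lam)) * B) ^ ℓ
      ∧ Summable (fun ℓ : ℕ =>
          (Nat.factorial ℓ : ℝ) ^ (κ - 1) * (ϱ ^ (1 / (1 + lam)) * B) ^ ℓ) := by
  intro s
  have hκ1 : κ < 1 := by rw [hκ, div_lt_one (by linarith)]; linarith
  have hϱ0 : 0 < ϱ := by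
    have := Real.tsum_one_div_nat_add_one_rpow_pos (p := 2 * lam) (by linarith)
    rw [hϱ]; positivity
  have hexp : 1 - κ / 2 = 1 / (1 + lam) := by rw [hκ]; field_simp; ring
  have hbκ : ∀ j, 0 ≤ b j ^ κ := fun j => Real.rpow_nonneg (hb j) κ
  have hS0 : 0 ≤ ∑ j : Fin s, b j ^ κ := sum_nonneg fun j _ => hbκ j
  have hS : ∑ j : Fin s, b j ^ κ ≤ B := by
    rw [hBdef, Fin.sum_univ_eq_sum_range (fun j => b j ^ κ)]
    exact hB.sum_le_tsum _ fun j _ => hbκ j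
  have hsumm := Real.summable_factorial_rpow_mul_pow (sub_neg.2 hκ1) (ϱ ^ (1 / (1 + lam)) * B)
  refine ⟨?_, hsumm⟩
  calc _ ≤ ∑ n ∈ range (s + 1),
          (n ! : ℝ) ^ (κ - 1) * (ϱ ^ (1 / (1 + lam)) * ∑ j : Fin s, b j ^ κ) ^ n := by
        simpa [hexp] using sum_powerset_factorial_mul_prod_div_sqrt_rpow_le
          (A := (univ : Finset (Fin s))) (b := fun j => b j) (fun j _ => hb j) hϱ0 κ
    _ ≤ ∑ n ∈ range (s + 1), (n ! : ℝ) ^ (κ - 1) * (ϱ ^ (1 / (1 + lam)) * B) ^ n := by gcongr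
    _ ≤ _ := hsumm.sum_le_tsum _ fun n _ => by have := hS0.trans hS; positivity
end
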